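/- The operator L_1 := Σ_{α=1}^{n} Σ_{p≥0} (p + 1/2 + μ_α)(p + 3/2 + μ_α)·T^{α,p}∘∂_{α,p+1} + (1/2)·Σ_{α,β=1}^{n} η^{αβ}·(1/2 + μ_α)(1/2 + μ_β)·∂_{α,0}∘∂_{β,0} equals V_1 as a linear operator on P. (This is the case j = 1 of the coincidence of the Virasoro operators of the Frobenius manifold of the Coxeter group D_n, expressed in the rescaled time variables, with the operators V_j obtained from vertex operators of the two-component BKP hierarchy.) -/

import Mathlib

open MvPolynomial

noncomputable section

/-- The polynomial algebra over ℚ in variables `t_{2m+1}` (index `(false, m)`) and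
`t̂_{2m+1}` (index `(true, m)`). -/
abbrev PP : Type := MvPolynomial (Bool × ℕ) ℚ

/-- The operator `p_k` (for `b = false`) resp. `p̂_k` (for `b = true`):
`2·∂/∂t_k` for odd positive `k`, multiplication by `(-k)·t_{-k}` for odd negative `k`,
and `0` for even `k`. -/
def pOp (b : Bool) (k : ℤ) : PP → PP := fun q =>
  if 0 < k ∧ Odd k then (2 : ℚ) • pderiv (b, (k.toNat - 1) / 2) q
  else if k < 0 ∧ Odd k then ((-k : ℤ) : ℚ) • (X (b, ((-k).toNat - 1) / 2) * q)
  else 0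

/-- The normal-ordered product `:p_a p_c:`, equal to `p_c ∘ p_a` if `a > 0 > c`
and `p_a ∘ p_c` otherwise. -/
def nord (b : Bool) (a c : ℤ) : PP → PP :=
  if 0 < a ∧ c < 0 then fun q => pOp b c (pOp b a q) else fun q => pOp b a (pOp b c q)

/-- The Virasoro operator
`V_j = (1/(8n-8))·Σ_{i∈ℤ} :p_i p_{(2n-2)j-i}: + (1/8)·Σ_{i∈ℤ} :p̂_i p̂_{2j-i}:
+ δ_{j,0}·(n/24)·(1 + 1/(2n-2))·Id`, acting pointwise (on each polynomial only finitely
many summands act nontrivially). -/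
def Vop (n : ℕ) (j : ℤ) : PP → PP := fun q =>
  (8 * (n : ℚ) - 8)⁻¹ • (∑ᶠ i : ℤ, nord false i ((2 * (n : ℤ) - 2) * j - i) q)
  + (8 : ℚ)⁻¹ • (∑ᶠ i : ℤ, nord true i (2 * j - i) q)
  + (if j = 0 then (n : ℚ) / 24 * (1 + (2 * (n : ℚ) - 2)⁻¹) else 0) • q

/-- For `α ∈ {1,…,n}`, the spectrum `μ_α = (2α-n)/(2n-2)` for `α ≤ n-1` and `μ_n = 0`. -/
def mu (n α : ℕ) : ℚ :=
  if α = n then 0 else (2 * (α : ℚ) - n) / (2 * (n : ℚ) - 2)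

/-- The rescaling constants: `c_{α,p} = (2n-2)·∏_{r=0}^{p}((2α-1)/(2n-2)+r)` for
`α ≤ n-1` and `c_{n,p} = 2·∏_{r=0}^{p}(1/2+r)`. -/
def cc (n α p : ℕ) : ℚ :=
  if α = n then 2 * ∏ r ∈ Finset.range (p + 1), ((1 : ℚ) / 2 + r)
  else (2 * (n : ℚ) - 2) * ∏ r ∈ Finset.range (p + 1), ((2 * (α : ℚ) - 1) / (2 * (n : ℚ) - 2) + r)

/-- The variable corresponding to the time `T^{α,p}`: the variable `t_{(2n-2)p+2α-1}`
(index `(false, (n-1)p+α-1)`) if `α ≤ n-1`, and `t̂_{2p+1}` (index `(true, p)`) if `α = n`. -/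
def vIdx (n α p : ℕ) : Bool × ℕ :=
  if α = n then (true, p) else (false, (n - 1) * p + α - 1)

/-- The operator `T^{α,p}`: multiplication by the rescaled time variable `c_{α,p}·t`. -/
def Tmul (n α p : ℕ) : PP → PP := fun q => cc n α p • (X (vIdx n α p) * q)

/-- The operator `∂_{α,p} = c_{α,p}⁻¹·∂/∂t`, the derivative in the rescaled time variable. -/
def Dop (n α p : ℕ) : PP → PP := fun q => (cc n α p)⁻¹ • pderiv (vIdx n α p) q

/-- The flat metric: `η_{αβ} = 1/(4n-4)` if `α+β = n`, `η_{nn} = 1/4`, and `0` otherwise. -/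
def eta (n α β : ℕ) : ℚ :=
  if α + β = n then (4 * (n : ℚ) - 4)⁻¹ else if α = n ∧ β = n then (4 : ℚ)⁻¹ else 0

/-- The inverse metric: `η^{αβ} = 4n-4` if `α+β = n`, `η^{nn} = 4`, and `0` otherwise. -/
def etaInv (n α β : ℕ) : ℚ :=
  if α + β = n then 4 * (n : ℚ) - 4 else if α = n ∧ β = n then 4 else 0

/-!
Expanding the normal-ordered products, `Σ_i :p_i p_{2d-i}:` is four times
`Σ_m (2m+1) t_{2m+1} ∂/∂t_{2m+2d+1} + Σ_{s<d} ∂/∂t_{2s+1} ∂/∂t_{2d-2s-1}`, and `V_1` combines it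
for `d = n-1` on the `t`-variables and `d = 1` on the `t̂`-variables. On the other side
`c_{α,p+1} = c_{α,p}·(p+3/2+μ_α)`, so `(p+1/2+μ_α)(p+3/2+μ_α)·T^{α,p}∂_{α,p+1}` is
`(p+1/2+μ_α)·t ∂/∂t` in the original variables; as `(α, p) ↦ (n-1)p+α-1` enumerates ℕ exactly
once, the first sum of `L_1` is the linear part of `V_1`, and the `η`-sum is its quadratic part.
-/

open Finset

lemma finsum_eq_sum_range_of_eq_zero {M : Type*} [AddCommMonoid M] (f : ℕ → M) {N : ℕ}
    (hf : ∀ m, N ≤ m → f m = 0) : ∑ᶠ m, f m = ∑ m ∈ range N, f m := by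
  refine finsum_eq_sum_of_support_subset f fun m hm => ?_
  by_contra h
  exact hm (hf m (by simpa using h))

lemma sum_range_mul_eq_sum_sum {M : Type*} [AddCommMonoid M] (f : ℕ → M) (d N : ℕ) :
    ∑ m ∈ range (d * N), f m = ∑ p ∈ range N, ∑ j ∈ range d, f (d * p + j) := by
  induction N with
  | zero => simp
  | succ N ih => rw [mul_add, mul_one, sum_range_add, ih, sum_range_succ]

lemma sum_finsum_mul_add {M : Type*} [AddCommMonoid M] (f : ℕ → M) {d N : ℕ} (hd : 0 < d)
    (hf : ∀ m, N ≤ m → f m = 0) :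
    ∑ j ∈ range d, ∑ᶠ p, f (d * p + j) = ∑ᶠ m, f m := by
  have hle : ∀ p, p ≤ d * p := fun p => Nat.le_mul_of_pos_left p hd
  calc ∑ j ∈ range d, ∑ᶠ p, f (d * p + j)
      = ∑ j ∈ range d, ∑ p ∈ range N, f (d * p + j) :=
        sum_congr rfl fun j _ => finsum_eq_sum_range_of_eq_zero _ fun p hp =>
          hf _ (hp.trans ((hle p).trans (Nat.le_add_right _ j)))
    _ = ∑ m ∈ range (d * N), f m := by rw [sum_comm, sum_range_mul_eq_sum_sum]
    _ = ∑ᶠ m, f m := (finsum_eq_sum_range_of_eq_zero f fun m hm => hf m ((hle N).trans hm)).symm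

lemma finsum_int_eq_finsum_odd {M : Type*} [AddCommMonoid M] (F : ℤ → M)
    (hF : ∀ k, F (2 * k) = 0) : ∑ᶠ i, F i = ∑ᶠ k, F (2 * k + 1) := by
  have hinj : Function.Injective fun k : ℤ => 2 * k + 1 := fun a b h => by simp at h; omega
  calc ∑ᶠ i, F i = ∑ᶠ i ∈ Set.univ, F i := (finsum_mem_univ F).symm
    _ = ∑ᶠ i ∈ Set.range fun k : ℤ => 2 * k + 1, F i := by
        refine finsum_mem_inter_support_eq' F _ _ fun i hi => ?_
        obtain ⟨k, rfl | rfl⟩ := Int.even_or_odd' i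
        · exact absurd (hF k) hi
        · simp
    _ = _ := finsum_mem_range hinj

lemma finsum_int_eq_sum_range_of_eq_zero {M : Type*} [AddCommMonoid M] (G : ℤ → M) (N d : ℕ)
    (hlo : ∀ k : ℤ, k < -N → G k = 0) (hhi : ∀ k : ℤ, N + d ≤ k → G k = 0) :
    ∑ᶠ k, G k = ∑ m ∈ range N, G (-(m + 1)) + ∑ s ∈ range d, G s + ∑ m ∈ range N, G (d + m) := by
  have hsupp : Function.support G ⊆ (range (N + d + N)).image fun j : ℕ => (j : ℤ) - N := by
    intro k hk
    have h1 : -(N : ℤ) ≤ k := not_lt.1 fun h => hk (hlo k h)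
    have h2 : k < N + d := not_le.1 fun h => hk (hhi k h)
    simp only [coe_image, coe_range, Set.mem_image, Set.mem_Iio]
    exact ⟨(k + N).toNat, by omega, by omega⟩
  rw [finsum_eq_sum_of_support_subset G hsupp, sum_image fun a _ b _ h => by simpa using h,
    sum_range_add, sum_range_add, ← sum_range_reflect]
  refine congrArg₂ (· + ·) (congrArg₂ (· + ·) ?_ ?_) ?_ <;>
    refine sum_congr rfl fun j hj => congr_arg G ?_ <;> simp only [mem_range] at hj <;> omega

lemma exists_pderiv_eq_zero (q : PP) :
    ∃ N : ℕ, ∀ (b : Bool) (m : ℕ), N ≤ m → pderiv (b, m) q = 0 := by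
  refine ⟨(q.vars.image Prod.snd).sup id + 1, fun b m hm => pderiv_eq_zero_of_notMem_vars ?_⟩
  intro hmem
  have : m ≤ (q.vars.image Prod.snd).sup id := le_sup (f := id) (mem_image_of_mem Prod.snd hmem)
  omega

section NormalOrdering

variable (b : Bool) (q : PP)

lemma pOp_zero (k : ℤ) : pOp b k 0 = 0 := by
  unfold pOp; split_ifs <;> simp

lemma pOp_two_mul (k : ℤ) : pOp b (2 * k) q = 0 := by
  simp [pOp, Int.not_odd_iff_even.2 (even_two_mul k)]

lemma pOp_two_mul_add_one (m : ℕ) : pOp b (2 * m + 1) q = (2 : ℚ) • pderiv (b, m) q := by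
  have h : ((2 * (m : ℤ) + 1).toNat - 1) / 2 = m := by omega
  simp [pOp, h, show (0 : ℤ) < 2 * m + 1 by omega]

lemma pOp_neg_two_mul_add_one (m : ℕ) :
    pOp b (-(2 * m + 1)) q = (2 * m + 1 : ℚ) • (X (b, m) * q) := by
  have h : ((-(-(2 * (m : ℤ) + 1))).toNat - 1) / 2 = m := by omega
  have hodd : Odd (-(2 * (m : ℤ) + 1)) := ⟨-m - 1, by ring⟩
  rw [pOp, if_neg (by omega), if_pos ⟨by omega, hodd⟩, h]
  push_cast
  ring_nf

lemma nord_two_mul (k c : ℤ) : nord b (2 * k) c q = 0 := by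
  unfold nord; split_ifs <;> simp [pOp_two_mul, pOp_zero]

lemma nord_neg_pos {a c : ℤ} (m k : ℕ) (ha : a = -(2 * m + 1)) (hc : c = 2 * k + 1) :
    nord b a c q = (2 * (2 * m + 1) : ℚ) • (X (b, m) * pderiv (b, k) q) := by
  subst ha hc
  rw [nord, if_neg (by omega), pOp_two_mul_add_one, pOp_neg_two_mul_add_one, mul_smul_comm,
    smul_smul, mul_comm]

lemma nord_pos_neg {a c : ℤ} (m k : ℕ) (ha : a = 2 * k + 1) (hc : c = -(2 * m + 1)) :
    nord b a c q = (2 * (2 * m + 1) : ℚ) • (X (b, m) * pderiv (b, k) q) := by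
  subst ha hc
  rw [nord, if_pos (by omega), pOp_two_mul_add_one, pOp_neg_two_mul_add_one, mul_smul_comm,
    smul_smul, mul_comm]

lemma nord_pos_pos {a c : ℤ} (s k : ℕ) (ha : a = 2 * s + 1) (hc : c = 2 * k + 1) :
    nord b a c q = (4 : ℚ) • pderiv (b, s) (pderiv (b, k) q) := by
  subst ha hc
  rw [nord, if_neg (by omega), pOp_two_mul_add_one, pOp_two_mul_add_one, Derivation.map_smul,
    smul_smul]
  norm_num

end NormalOrdering

/-- `Σ_m (2m+1) t_{2m+1} ∂/∂t_{2m+2d+1}` in the `b`-family of variables. -/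
def shiftOp (b : Bool) (d : ℕ) (q : PP) : PP :=
  ∑ᶠ m : ℕ, (2 * m + 1 : ℚ) • (X (b, m) * pderiv (b, m + d) q)

/-- `Σ_{s<d} ∂/∂t_{2s+1} ∂/∂t_{2d-2s-1}` in the `b`-family of variables. -/
def pairOp (b : Bool) (d : ℕ) (q : PP) : PP :=
  ∑ s ∈ range d, pderiv (b, s) (pderiv (b, d - 1 - s) q)

lemma finsum_nord (b : Bool) (d : ℕ) (q : PP) :
    ∑ᶠ i : ℤ, nord b i (2 * d - i) q = (4 : ℚ) • (shiftOp b d q + pairOp b d q) := by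
  obtain ⟨N, hN⟩ := exists_pderiv_eq_zero q
  have hneg : ∀ m : ℕ, nord b (2 * (-(m + 1 : ℤ)) + 1) (2 * d - (2 * (-(m + 1 : ℤ)) + 1)) q =
      (2 : ℚ) • (2 * m + 1 : ℚ) • (X (b, m) * pderiv (b, m + d) q) := fun m => by
    rw [nord_neg_pos b q m (m + d) (by ring) (by push_cast; ring), mul_smul]
  have hpos : ∀ m : ℕ, nord b (2 * (d + m : ℤ) + 1) (2 * d - (2 * (d + m : ℤ) + 1)) q =
      (2 : ℚ) • (2 * m + 1 : ℚ) • (X (b, m) * pderiv (b, m + d) q) := fun m => by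
    rw [nord_pos_neg b q m (m + d) (by push_cast; ring) (by ring), mul_smul]
  have hmid : ∀ s ∈ range d, nord b (2 * (s : ℤ) + 1) (2 * d - (2 * (s : ℤ) + 1)) q =
      (4 : ℚ) • pderiv (b, s) (pderiv (b, d - 1 - s) q) := fun s hs => by
    rw [nord_pos_pos b q s (d - 1 - s) rfl (by simp only [mem_range] at hs; omega)]
  have hlo : ∀ k : ℤ, k < -N → nord b (2 * k + 1) (2 * d - (2 * k + 1)) q = 0 := fun k hk => by
    rw [nord_neg_pos b q (-k - 1).toNat (d - k - 1).toNat (by omega) (by omega),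
      hN b _ (by omega), mul_zero, smul_zero]
  have hhi : ∀ k : ℤ, N + d ≤ k → nord b (2 * k + 1) (2 * d - (2 * k + 1)) q = 0 := fun k hk => by
    rw [nord_pos_neg b q (k - d).toNat k.toNat (by omega) (by omega), hN b _ (by omega), mul_zero,
      smul_zero]
  rw [finsum_int_eq_finsum_odd _ fun k => nord_two_mul b q k _,
    finsum_int_eq_sum_range_of_eq_zero _ N d hlo hhi, sum_congr rfl fun m _ => hneg m,
    sum_congr rfl hmid, sum_congr rfl fun m _ => hpos m, ← smul_sum, ← smul_sum, shiftOp, pairOp,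
    finsum_eq_sum_range_of_eq_zero (N := N) _ fun m hm => by
      rw [hN b _ (by omega), mul_zero, smul_zero]]
  module

lemma Vop_one {n : ℕ} (hn : 2 ≤ n) (q : PP) :
    Vop n 1 q = (2 * (n : ℚ) - 2)⁻¹ • (shiftOp false (n - 1) q + pairOp false (n - 1) q)
      + (2 : ℚ)⁻¹ • (shiftOp true 1 q + pairOp true 1 q) := by
  have hfalse : ∀ i : ℤ, (2 * (n : ℤ) - 2) * 1 - i = 2 * ((n - 1 : ℕ) : ℤ) - i := fun i => by
    omega
  have htrue : ∀ i : ℤ, 2 * 1 - i = 2 * ((1 : ℕ) : ℤ) - i := fun i => by omega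
  have hn' : (n : ℚ) - 1 ≠ 0 := sub_ne_zero.2 (by exact_mod_cast (by omega : n ≠ 1))
  simp only [Vop, hfalse, htrue, finsum_nord, one_ne_zero, if_false, zero_smul, add_zero, smul_smul]
  congr 2
  · field_simp
    ring
  · norm_num

section Rescaling

variable {n : ℕ}

@[simp] lemma mu_self : mu n n = 0 := by simp [mu]

@[simp] lemma vIdx_self (p : ℕ) : vIdx n n p = (true, p) := by simp [vIdx]

lemma vIdx_of_ne {α : ℕ} (hα : α ≠ n) (p : ℕ) : vIdx n α p = (false, (n - 1) * p + α - 1) := by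
  simp [vIdx, hα]

@[simp] lemma cc_self_zero : cc n n 0 = 1 := by norm_num [cc]

lemma cc_zero_of_ne {α : ℕ} (hn : n ≠ 1) (hα : α ≠ n) : cc n α 0 = 2 * α - 1 := by
  have : (n : ℚ) - 1 ≠ 0 := by
    rw [sub_ne_zero]; norm_cast
  rw [cc, if_neg hα, prod_range_one]
  field_simp
  ring

lemma cc_succ (hn : n ≠ 1) (α p : ℕ) :
    cc n α (p + 1) = cc n α p * ((p : ℚ) + 3 / 2 + mu n α) := by
  have : (n : ℚ) - 1 ≠ 0 := by
    rw [sub_ne_zero]; norm_cast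
  unfold cc mu
  split_ifs
  · rw [prod_range_succ]; push_cast; ring
  · rw [prod_range_succ, ← mul_assoc]
    congr 1
    push_cast
    field_simp
    ring

lemma cc_ne_zero (hn : 2 ≤ n) {α : ℕ} (hα : 1 ≤ α) (p : ℕ) : cc n α p ≠ 0 := by
  have hn' : (2 : ℚ) ≤ n := by exact_mod_cast hn
  have hα' : (1 : ℚ) ≤ α := by exact_mod_cast hα
  unfold cc
  split_ifs
  · positivity
  · refine mul_ne_zero (by linarith) (prod_ne_zero_iff.2 fun r _ => ?_)
    have : 0 < (2 * (α : ℚ) - 1) / (2 * n - 2) := div_pos (by linarith) (by linarith)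
    positivity

lemma smul_Tmul_Dop (hn : 2 ≤ n) {α : ℕ} (hα : 1 ≤ α) (p : ℕ) (q : PP) :
    (((p : ℚ) + 1 / 2 + mu n α) * ((p : ℚ) + 3 / 2 + mu n α)) • Tmul n α p (Dop n α (p + 1) q)
      = ((p : ℚ) + 1 / 2 + mu n α) • (X (vIdx n α p) * pderiv (vIdx n α (p + 1)) q) := by
  have hsucc := cc_succ (by omega : n ≠ 1) α p
  have hne := cc_ne_zero hn hα (p + 1)
  rw [hsucc, mul_ne_zero_iff] at hne
  rw [Tmul, Dop, mul_smul_comm, smul_smul, smul_smul, hsucc]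
  congr 1
  obtain ⟨hc, hy⟩ := hne
  generalize (p : ℚ) + 3 / 2 + mu n α = y at hy ⊢
  field_simp

end Rescaling

lemma sum_Icc_one_eq_sum_range_add {M : Type*} [AddCommMonoid M] {n : ℕ} (hn : 1 ≤ n)
    (f : ℕ → M) : ∑ α ∈ Icc 1 n, f α = ∑ j ∈ range (n - 1), f (j + 1) + f n := by
  obtain ⟨k, rfl⟩ : ∃ k, n = k + 1 := ⟨n - 1, by omega⟩
  rw [sum_Icc_succ_top (by omega), ← Ico_add_one_right_eq_Icc, sum_Ico_eq_sum_range,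
    Nat.add_sub_cancel]
  simp only [add_comm 1]

lemma finsum_smul_Tmul_Dop_self {n : ℕ} (hn : 2 ≤ n) (q : PP) :
    ∑ᶠ p : ℕ, (((p : ℚ) + 1 / 2 + mu n n) * ((p : ℚ) + 3 / 2 + mu n n)) •
        Tmul n n p (Dop n n (p + 1) q)
      = (2 : ℚ)⁻¹ • shiftOp true 1 q := by
  rw [shiftOp, smul_finsum]
  refine finsum_congr fun p => ?_
  rw [smul_Tmul_Dop hn (by omega), vIdx_self, vIdx_self, mu_self, smul_smul]
  congr 1
  ring

lemma sum_finsum_smul_Tmul_Dop_of_lt {n : ℕ} (hn : 2 ≤ n) (q : PP) :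
    ∑ j ∈ range (n - 1), ∑ᶠ p : ℕ,
        (((p : ℚ) + 1 / 2 + mu n (j + 1)) * ((p : ℚ) + 3 / 2 + mu n (j + 1))) •
          Tmul n (j + 1) p (Dop n (j + 1) (p + 1) q)
      = (2 * (n : ℚ) - 2)⁻¹ • shiftOp false (n - 1) q := by
  obtain ⟨N, hN⟩ := exists_pderiv_eq_zero q
  set f : ℕ → PP := fun m => (2 * m + 1 : ℚ) • (X (false, m) * pderiv (false, m + (n - 1)) q)
  have hterm : ∀ j ∈ range (n - 1), ∀ p : ℕ,
      (((p : ℚ) + 1 / 2 + mu n (j + 1)) * ((p : ℚ) + 3 / 2 + mu n (j + 1))) •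
        Tmul n (j + 1) p (Dop n (j + 1) (p + 1) q)
      = (2 * (n : ℚ) - 2)⁻¹ • f ((n - 1) * p + j) := by
    intro j hj p
    have hjn : j + 1 ≠ n := by simp only [mem_range] at hj; omega
    have hn' : (n : ℚ) - 1 ≠ 0 := sub_ne_zero.2 (by exact_mod_cast (by omega : n ≠ 1))
    rw [smul_Tmul_Dop hn (by omega), vIdx_of_ne hjn, vIdx_of_ne hjn, smul_smul,
      show (n - 1) * (p + 1) + (j + 1) - 1 = (n - 1) * p + j + (n - 1) by rw [mul_add]; omega,
      show (n - 1) * p + (j + 1) - 1 = (n - 1) * p + j by omega]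
    congr 1
    simp only [mu, if_neg hjn]
    push_cast [show 1 ≤ n by omega]
    field_simp
    ring
  rw [shiftOp, ← sum_finsum_mul_add f (by omega : 0 < n - 1) (N := N)
    fun m hm => by simp only [f]; rw [hN false _ (by omega), mul_zero, smul_zero], smul_sum]
  refine sum_congr rfl fun j hj => ?_
  rw [smul_finsum]
  exact finsum_congr (hterm j hj)

lemma sum_etaInv_Dop_of_lt {n j : ℕ} (hn : 2 ≤ n) (hj : j + 1 < n) (q : PP) :
    ∑ β ∈ Icc 1 n, (etaInv n (j + 1) β * (1 / 2 + mu n (j + 1)) * (1 / 2 + mu n β)) •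
        Dop n (j + 1) 0 (Dop n β 0 q)
      = (2 * (2 * (n : ℚ) - 2)⁻¹) • pderiv (false, j) (pderiv (false, n - 1 - 1 - j) q) := by
  have hjn : j + 1 ≠ n := by omega
  have hβn : n - (j + 1) ≠ n := by omega
  have hn1 : n ≠ 1 := by omega
  rw [sum_eq_single (n - (j + 1))]
  · rw [Dop, Dop, vIdx_of_ne hjn, vIdx_of_ne hβn, cc_zero_of_ne hn1 hjn, cc_zero_of_ne hn1 hβn,
      Derivation.map_smul, smul_smul, smul_smul, show (n - 1) * 0 + (j + 1) - 1 = j by omega,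
      show (n - 1) * 0 + (n - (j + 1)) - 1 = n - 1 - 1 - j by omega]
    congr 1
    have hn' : (n : ℚ) - 1 ≠ 0 := sub_ne_zero.2 (by exact_mod_cast hn1)
    have hj' : (j : ℚ) + 2 ≤ n := by exact_mod_cast hj
    simp only [etaInv, mu, if_pos (show j + 1 + (n - (j + 1)) = n by omega), if_neg hjn,
      if_neg hβn]
    push_cast [hj.le]
    have h1 : 2 * ((j : ℚ) + 1) - 1 ≠ 0 := by linarith
    have h2 : 2 * ((n : ℚ) - (j + 1)) - 1 ≠ 0 := by linarith
    field_simp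
    ring
  · intro β hβ hne
    have h0 : etaInv n (j + 1) β = 0 := by
      simp only [mem_Icc] at hβ
      rw [etaInv, if_neg (by omega), if_neg (by omega)]
    rw [h0, zero_mul, zero_mul, zero_smul]
  · exact fun h => absurd (mem_Icc.2 ⟨by omega, by omega⟩) h

lemma sum_etaInv_Dop_self {n : ℕ} (hn : 2 ≤ n) (q : PP) :
    ∑ β ∈ Icc 1 n, (etaInv n n β * (1 / 2 + mu n n) * (1 / 2 + mu n β)) • Dop n n 0 (Dop n β 0 q)
      = pderiv (true, 0) (pderiv (true, 0) q) := by
  rw [sum_eq_single n]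
  · norm_num [Dop, etaInv, show n + n ≠ n by omega, show n ≠ 0 by omega]
  · intro β hβ hne
    have h0 : etaInv n n β = 0 := by
      simp only [mem_Icc] at hβ
      rw [etaInv, if_neg (by omega), if_neg (by tauto)]
    rw [h0, zero_mul, zero_mul, zero_smul]
  · exact fun h => absurd (mem_Icc.2 ⟨by omega, le_rfl⟩) h

lemma half_sum_etaInv_Dop {n : ℕ} (hn : 2 ≤ n) (q : PP) :
    (1 / 2 : ℚ) • ∑ α ∈ Icc 1 n, ∑ β ∈ Icc 1 n,
        (etaInv n α β * (1 / 2 + mu n α) * (1 / 2 + mu n β)) • Dop n α 0 (Dop n β 0 q)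
      = (2 * (n : ℚ) - 2)⁻¹ • pairOp false (n - 1) q + (2 : ℚ)⁻¹ • pairOp true 1 q := by
  rw [sum_Icc_one_eq_sum_range_add (by omega),
    sum_congr rfl fun j hj => sum_etaInv_Dop_of_lt hn (by simp only [mem_range] at hj; omega) q,
    sum_etaInv_Dop_self hn, ← smul_sum, pairOp, pairOp, sum_range_one]
  module

/-- the Virasoro operator
`L_1 = Σ_α Σ_{p≥0} (p+1/2+μ_α)(p+3/2+μ_α)·T^{α,p}∘∂_{α,p+1}
+ (1/2)·Σ_{α,β} η^{αβ}·(1/2+μ_α)(1/2+μ_β)·∂_{α,0}∘∂_{β,0}`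
of the Frobenius manifold of the Coxeter group `D_n` equals `V_1`. -/
theorem L_one_eq_V_one (n : ℕ) (hn : 3 ≤ n) (q : PP) :
    (∑ α ∈ Finset.Icc 1 n, ∑ᶠ p : ℕ,
        (((p : ℚ) + 1 / 2 + mu n α) * ((p : ℚ) + 3 / 2 + mu n α)) •
          Tmul n α p (Dop n α (p + 1) q))
      + (1 / 2 : ℚ) • ∑ α ∈ Finset.Icc 1 n, ∑ β ∈ Finset.Icc 1 n,
          (etaInv n α β * (1 / 2 + mu n α) * (1 / 2 + mu n β)) •
            Dop n α 0 (Dop n β 0 q)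
      = Vop n 1 q := by
  have h2 : 2 ≤ n := by omega
  rw [half_sum_etaInv_Dop h2, sum_Icc_one_eq_sum_range_add (by omega),
    sum_finsum_smul_Tmul_Dop_of_lt h2, finsum_smul_Tmul_Dop_self h2, Vop_one h2]
  module

end
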